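/- Explicit formula for the level-0 stationary vector: if the (ℓ+1)×(ℓ+1) matrix S δ_0 − B^0 is invertible (here S δ_0 is the matrix whose column 0 equals the column vector S and whose other columns are zero), then π^0 = δ_0 (S δ_0 − B^0)^{−1}. -/

import Mathlib

/-!
Write `p m` for the level-`m` block of `π`. Zero row sums give `D^{m+1} 1 = -B^{m+1} 1`, and the
DES property makes `p (m+1) D^{m+1}` the multiple `(p (m+1) D^{m+1} 1) δ₀` of `δ₀`. A downward
induction from the top level, alternating these two facts with the balance equation of each level,
shows that the probability flow across every cut between levels `m` and `m+1` balances,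
`p (m+1) D^{m+1} 1 = p m U^m 1`, and hence `p m U^m + p (m+1) B^{m+1} = 0`. So
`p (m+1) = p m R_{m+1}`, the balance equation of level `0` becomes `p 0 B^0 = 0`, and the
normalization becomes `p 0 ⬝ S = 1`; together, `p 0 (S δ₀ - B^0) = δ₀`.
-/

open Matrix Finset

section LevelBlocks

variable {R ι : Type*} [Semiring R] {M : ℕ}

/-- Level blocks are indexed by `ℕ` and vanish above level `M`, so that the boundary levels `0`
and `M` obey the same block equations as the interior ones. -/
def levelVec (π : Fin (M+1) × ι → R) (m : ℕ) : ι → R :=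
  fun i => if h : m ≤ M then π (⟨m, Nat.lt_succ_of_le h⟩, i) else 0

def levelBlock (Q : Matrix (Fin (M+1) × ι) (Fin (M+1) × ι) R) (m n : ℕ) : Matrix ι ι R :=
  Matrix.of fun i j =>
    if h : m ≤ M ∧ n ≤ M then
      Q (⟨m, Nat.lt_succ_of_le h.1⟩, i) (⟨n, Nat.lt_succ_of_le h.2⟩, j)
    else 0

lemma levelVec_of_lt (π : Fin (M+1) × ι → R) {m : ℕ} (hm : M < m) : levelVec π m = 0 := by
  ext i; simp [levelVec, Nat.not_le.mpr hm]

lemma levelBlock_of_lt (Q : Matrix (Fin (M+1) × ι) (Fin (M+1) × ι) R) {m n : ℕ}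
    (h : M < m ∨ M < n) : levelBlock Q m n = 0 := by
  ext i j; simp only [levelBlock, of_apply, Matrix.zero_apply]; rw [dif_neg (by omega)]

lemma levelBlock_eq_of_apply {Q : Matrix (Fin (M+1) × ι) (Fin (M+1) × ι) R}
    {X : Matrix ι ι R} {m n : ℕ} (hm : m ≤ M) (hn : n ≤ M)
    (hX : ∀ i j, X i j = Q (⟨m, Nat.lt_succ_of_le hm⟩, i) (⟨n, Nat.lt_succ_of_le hn⟩, j)) :
    levelBlock Q m n = X := by
  ext i j; simp [levelBlock, hm, hn, hX]

lemma levelBlock_of_tridiagonal {Q : Matrix (Fin (M+1) × ι) (Fin (M+1) × ι) R}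
    (htri : ∀ (m n : Fin (M+1)) (i j : ι),
      1 < |(m.val : ℤ) - (n.val : ℤ)| → Q (m, i) (n, j) = 0)
    {m n : ℕ} (h : m + 1 < n ∨ n + 1 < m) : levelBlock Q m n = 0 := by
  ext i j
  simp only [levelBlock, of_apply, Matrix.zero_apply]
  split_ifs
  · exact htri _ _ i j (by simp only; rw [lt_abs]; omega)
  · rfl

lemma sum_eq_sum_levelVec [Fintype ι] (π : Fin (M+1) × ι → R) :
    ∑ s, π s = ∑ m ∈ range (M+1), levelVec π m ⬝ᵥ 1 := by
  rw [← Fin.sum_univ_eq_sum_range, Fintype.sum_prod_type]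
  simp [levelVec, dotProduct_one, Fin.is_le]

lemma vecMul_apply_eq_sum_levelBlock [Fintype ι] (π : Fin (M+1) × ι → R)
    (Q : Matrix (Fin (M+1) × ι) (Fin (M+1) × ι) R) (n : Fin (M+1)) (j : ι) :
    (π ᵥ* Q) (n, j) = ∑ m ∈ range (M+1), (levelVec π m ᵥ* levelBlock Q m n) j := by
  rw [← Fin.sum_univ_eq_sum_range (fun m => (levelVec π m ᵥ* levelBlock Q m n) j)]
  simp [vecMul, dotProduct, Fintype.sum_prod_type, levelVec, levelBlock, Fin.is_le]

lemma mulVec_one_apply_eq_sum_levelBlock [Fintype ι]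
    (Q : Matrix (Fin (M+1) × ι) (Fin (M+1) × ι) R) (m : Fin (M+1)) (i : ι) :
    (Q *ᵥ 1) (m, i) = ∑ n ∈ range (M+1), (levelBlock Q m n *ᵥ 1) i := by
  rw [← Fin.sum_univ_eq_sum_range (fun n => (levelBlock Q m n *ᵥ 1) i)]
  simp [mulVec, dotProduct, Fintype.sum_prod_type, levelBlock, Fin.is_le]

lemma sum_range_eq_sum_of_support {β : Type*} [AddCommMonoid β] {f : ℕ → β} (s : Finset ℕ)
    (hs : ∀ m ∉ s, f m = 0) (hM : ∀ m, M < m → f m = 0) :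
    ∑ m ∈ range (M+1), f m = ∑ m ∈ s, f m :=
  sum_congr_of_eq_on_inter (fun m _ hm => hs m hm)
    (fun m _ hm => hM m (by simpa using hm)) (fun _ _ _ => rfl)

lemma sum_levelVec_vecMul_levelBlock [Fintype ι] {π : Fin (M+1) × ι → R}
    {Q : Matrix (Fin (M+1) × ι) (Fin (M+1) × ι) R} (hπ : π ᵥ* Q = 0) (n : ℕ) :
    ∑ m ∈ range (M+1), levelVec π m ᵥ* levelBlock Q m n = 0 := by
  by_cases hn : n ≤ M
  · ext j
    rw [Finset.sum_apply, ← vecMul_apply_eq_sum_levelBlock π Q ⟨n, Nat.lt_succ_of_le hn⟩, hπ]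
    rfl
  · simp [levelBlock_of_lt Q (Or.inr (Nat.not_le.mp hn))]

lemma sum_levelBlock_mulVec_one [Fintype ι] {Q : Matrix (Fin (M+1) × ι) (Fin (M+1) × ι) R}
    (hrow : ∀ s, ∑ t, Q s t = 0) (m : ℕ) :
    ∑ n ∈ range (M+1), levelBlock Q m n *ᵥ 1 = 0 := by
  by_cases hm : m ≤ M
  · ext i
    rw [Finset.sum_apply, ← mulVec_one_apply_eq_sum_levelBlock Q ⟨m, Nat.lt_succ_of_le hm⟩]
    simpa [mulVec, dotProduct] using hrow _
  · simp [levelBlock_of_lt Q (Or.inl (Nat.not_le.mp hm))]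

end LevelBlocks

section Redirection

variable {R ι : Type*} [CommRing R] [Fintype ι] [DecidableEq ι]

lemma eq_vecMulVec_mulVec_one_single {X : Matrix ι ι R} {e : ι}
    (hX : ∀ i j, j ≠ e → X i j = 0) :
    X = vecMulVec (X *ᵥ 1) (Pi.single e 1) := by
  ext i j
  by_cases hj : j = e
  · subst hj
    simp [vecMulVec_apply, mulVec, dotProduct, Finset.sum_eq_single j (fun k _ hk => hX i k hk)]
  · simp [vecMulVec_apply, hX i j hj, hj]

lemma vecMulVec_mulVec_one_single_apply (X : Matrix ι ι R) (e i j : ι) :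
    vecMulVec (X *ᵥ 1) (Pi.single e 1) i j = if j = e then ∑ k, X i k else 0 := by
  simp [vecMulVec_apply, mulVec, dotProduct, Pi.single_apply]

lemma vecMulVec_single_mulVec_one (u : ι → R) (e : ι) :
    vecMulVec u (Pi.single e 1) *ᵥ 1 = u := by
  ext i; simp [vecMulVec_apply, mulVec, dotProduct, Pi.single_apply]

/-- The paper's `B^m = W^m + Ũ^m`: exits from level `m` upwards are redirected to the entrance
state `e` of level `m`. -/
def redirectedBlock (e : ι) (A : ℕ → ℕ → Matrix ι ι R) (m : ℕ) : Matrix ι ι R :=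
  A m m + vecMulVec (A m (m+1) *ᵥ 1) (Pi.single e 1)

/-- The block form of `p Q = 0` and `Q 1 = 0` for a level-tridiagonal `Q` whose downward blocks
enter each level only at `e`, with no levels above `M`. -/
structure IsDESStationary (M : ℕ) (e : ι) (A : ℕ → ℕ → Matrix ι ι R) (p : ℕ → ι → R) :
    Prop where
  balance_zero : p 0 ᵥ* A 0 0 + p 1 ᵥ* A 1 0 = 0
  balance_succ (n : ℕ) :
    p n ᵥ* A n (n+1) + p (n+1) ᵥ* A (n+1) (n+1) + p (n+2) ᵥ* A (n+2) (n+1) = 0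
  rowSum_succ (n : ℕ) : A (n+1) n *ᵥ 1 + A (n+1) (n+1) *ᵥ 1 + A (n+1) (n+2) *ᵥ 1 = 0
  down_entrance (n : ℕ) (i j : ι) : j ≠ e → A (n+1) n i j = 0
  up_top : A M (M+1) = 0
  level_top : p (M+1) = 0

namespace IsDESStationary

variable {M : ℕ} {e : ι} {A : ℕ → ℕ → Matrix ι ι R} {p : ℕ → ι → R}

lemma vecMul_down_eq (h : IsDESStationary M e A p) {n : ℕ}
    (hcut : p (n+1) ⬝ᵥ A (n+1) n *ᵥ 1 = p n ⬝ᵥ A n (n+1) *ᵥ 1) :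
    p (n+1) ᵥ* A (n+1) n = p n ᵥ* vecMulVec (A n (n+1) *ᵥ 1) (Pi.single e 1) := by
  rw [eq_vecMulVec_mulVec_one_single (h.down_entrance n), vecMul_vecMulVec, vecMul_vecMulVec,
    hcut]

lemma cut_balance_of_vecMul_redirectedBlock (h : IsDESStationary M e A p) {n : ℕ}
    (hlev : p n ᵥ* A n (n+1) + p (n+1) ᵥ* redirectedBlock e A (n+1) = 0) :
    p (n+1) ⬝ᵥ A (n+1) n *ᵥ 1 = p n ⬝ᵥ A n (n+1) *ᵥ 1 := by
  have hrow : A (n+1) n *ᵥ 1 = -(redirectedBlock e A (n+1) *ᵥ 1) := by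
    rw [redirectedBlock, add_mulVec, vecMulVec_single_mulVec_one]
    exact eq_neg_of_add_eq_zero_left (by rw [← add_assoc]; exact h.rowSum_succ n)
  rw [hrow, dotProduct_neg, dotProduct_mulVec, dotProduct_mulVec,
    eq_neg_of_add_eq_zero_right hlev, neg_dotProduct, neg_neg]

lemma vecMul_redirectedBlock_of_cut (h : IsDESStationary M e A p) {n : ℕ}
    (hcut : p (n+2) ⬝ᵥ A (n+2) (n+1) *ᵥ 1 = p (n+1) ⬝ᵥ A (n+1) (n+2) *ᵥ 1) :
    p n ᵥ* A n (n+1) + p (n+1) ᵥ* redirectedBlock e A (n+1) = 0 := by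
  rw [redirectedBlock, vecMul_add, ← add_assoc, ← h.vecMul_down_eq hcut]
  exact h.balance_succ n

lemma cut_balance (h : IsDESStationary M e A p) {n : ℕ} (hn : n ≤ M) :
    p (n+1) ⬝ᵥ A (n+1) n *ᵥ 1 = p n ⬝ᵥ A n (n+1) *ᵥ 1 := by
  induction hn using Nat.decreasingInduction with
  | self => simp [h.level_top, h.up_top]
  | of_succ k _ ih =>
    exact h.cut_balance_of_vecMul_redirectedBlock (h.vecMul_redirectedBlock_of_cut ih)

lemma vecMul_redirectedBlock_succ (h : IsDESStationary M e A p) {n : ℕ} (hn : n < M) :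
    p n ᵥ* A n (n+1) + p (n+1) ᵥ* redirectedBlock e A (n+1) = 0 :=
  h.vecMul_redirectedBlock_of_cut (h.cut_balance hn)

lemma vecMul_redirectedBlock_zero (h : IsDESStationary M e A p) :
    p 0 ᵥ* redirectedBlock e A 0 = 0 := by
  rw [redirectedBlock, vecMul_add, ← h.vecMul_down_eq (h.cut_balance (Nat.zero_le M))]
  exact h.balance_zero

end IsDESStationary

end Redirection

lemma isDESStationary_levelBlock {R ι : Type*} [CommRing R] [Fintype ι] [DecidableEq ι]
    {M : ℕ} {e : ι} {π : Fin (M+1) × ι → R} {Q : Matrix (Fin (M+1) × ι) (Fin (M+1) × ι) R}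
    (htri : ∀ (m n : Fin (M+1)) (i j : ι),
      1 < |(m.val : ℤ) - (n.val : ℤ)| → Q (m, i) (n, j) = 0)
    (hrow : ∀ s, ∑ t, Q s t = 0) (hπ : π ᵥ* Q = 0)
    (hDES : ∀ n i j, j ≠ e → levelBlock Q (n+1) n i j = 0) :
    IsDESStationary M e (levelBlock Q) (levelVec π) where
  balance_zero := by
    rw [← sum_levelVec_vecMul_levelBlock hπ 0, sum_range_eq_sum_of_support {0, 1}]
    · simp
    · intro m hm
      simp only [mem_insert, mem_singleton] at hm
      rw [levelBlock_of_tridiagonal htri (by omega), vecMul_zero]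
    · intro m hm
      rw [levelVec_of_lt π hm, zero_vecMul]
  balance_succ n := by
    rw [← sum_levelVec_vecMul_levelBlock hπ (n+1), sum_range_eq_sum_of_support {n, n+1, n+2}]
    · simp [add_assoc]
    · intro m hm
      simp only [mem_insert, mem_singleton] at hm
      rw [levelBlock_of_tridiagonal htri (by omega), vecMul_zero]
    · intro m hm
      rw [levelVec_of_lt π hm, zero_vecMul]
  rowSum_succ n := by
    rw [← sum_levelBlock_mulVec_one hrow (n+1), sum_range_eq_sum_of_support {n, n+1, n+2}]
    · simp [add_assoc]
    · intro m hm
      simp only [mem_insert, mem_singleton] at hm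
      rw [levelBlock_of_tridiagonal htri (by omega), zero_mulVec]
    · intro m hm
      rw [levelBlock_of_lt Q (Or.inr hm), zero_mulVec]
  down_entrance := hDES
  up_top := levelBlock_of_lt Q (Or.inr (Nat.lt_succ_self M))
  level_top := levelVec_of_lt π (Nat.lt_succ_self M)

section Inversion

variable {R ι : Type*} [CommRing R] [Fintype ι] [DecidableEq ι]

lemma eq_vecMul_nonsing_inv {A : Matrix ι ι R} (hA : IsUnit A) {v w : ι → R}
    (h : v ᵥ* A = w) : v = w ᵥ* A⁻¹ := by
  rw [← h, vecMul_vecMul, mul_nonsing_inv _ ((isUnit_iff_isUnit_det A).mp hA), vecMul_one]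

lemma eq_vecMul_neg_mul_nonsing_inv {U B : Matrix ι ι R} (hB : IsUnit B) {u v : ι → R}
    (h : u ᵥ* U + v ᵥ* B = 0) : v = u ᵥ* -(U * B⁻¹) := by
  rw [eq_vecMul_nonsing_inv hB (eq_neg_of_add_eq_zero_right h), neg_vecMul, vecMul_vecMul,
    vecMul_neg]

end Inversion

section Products

variable {R ι : Type*} [CommSemiring R] [Fintype ι]

lemma eq_vecMul_prod_range' [DecidableEq ι] {p : ℕ → ι → R} {T : ℕ → Matrix ι ι R} {m : ℕ}
    (h : ∀ n < m, p (n+1) = p n ᵥ* T (n+1)) :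
    p m = p 0 ᵥ* ((List.range' 1 m).map T).prod := by
  induction m with
  | zero => simp
  | succ m ih =>
    rw [List.range'_concat, List.map_append, List.prod_append, ← vecMul_vecMul,
      ← ih (fun n hn => h n (by omega)), h m (Nat.lt_succ_self m)]
    simp [add_comm]

lemma dotProduct_one_add_sum_mulVec_one {p : ℕ → ι → R} {P : ℕ → Matrix ι ι R} {M : ℕ}
    (h : ∀ m ∈ Icc 1 M, p m = p 0 ᵥ* P m) :
    p 0 ⬝ᵥ (1 + ∑ m ∈ Icc 1 M, P m *ᵥ 1) = ∑ m ∈ range (M+1), p m ⬝ᵥ 1 := by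
  have hrange : range (M+1) = insert 0 (Icc 1 M) := by ext; simp; omega
  rw [hrange, sum_insert (by simp), dotProduct_add, dotProduct_sum]
  congr 1
  refine sum_congr rfl fun m hm => ?_
  rw [dotProduct_mulVec, h m hm]

end Products

theorem stmt_7
    (M l : ℕ)
    (Q : Matrix (Fin (M+1) × Fin (l+1)) (Fin (M+1) × Fin (l+1)) ℝ)
    (htri : ∀ (m n : Fin (M+1)) (i j : Fin (l+1)),
      1 < |(m.val : ℤ) - (n.val : ℤ)| → Q (m, i) (n, j) = 0)
    (hrow : ∀ s, ∑ t, Q s t = 0)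
    (W U D : ℕ → Matrix (Fin (l+1)) (Fin (l+1)) ℝ)
    (hW : ∀ (m : ℕ) (hm : m ≤ M) (i j : Fin (l+1)),
      W m i j = Q (⟨m, by omega⟩, i) (⟨m, by omega⟩, j))
    (hU : ∀ (m : ℕ) (hm : m < M) (i j : Fin (l+1)),
      U m i j = Q (⟨m, by omega⟩, i) (⟨m+1, by omega⟩, j))
    (hD : ∀ (m : ℕ) (hm1 : 1 ≤ m) (hm2 : m ≤ M) (i j : Fin (l+1)),
      D m i j = Q (⟨m, by omega⟩, i) (⟨m-1, by omega⟩, j))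
    (hDES : ∀ (m : ℕ), 1 ≤ m → m ≤ M → ∀ (i j : Fin (l+1)), j ≠ 0 → D m i j = 0)
    (Ut : ℕ → Matrix (Fin (l+1)) (Fin (l+1)) ℝ)
    (hUt : ∀ (m : ℕ), m < M → ∀ (i j : Fin (l+1)),
      Ut m i j = if j = 0 then ∑ k, U m i k else 0)
    (hUtM : Ut M = 0)
    (B : ℕ → Matrix (Fin (l+1)) (Fin (l+1)) ℝ)
    (hB : ∀ (m : ℕ), m ≤ M → B m = W m + Ut m)
    (π : Fin (M+1) × Fin (l+1) → ℝ)
    (hπ : Matrix.vecMul π Q = 0)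
    (hBinv : ∀ (m : ℕ), 1 ≤ m → m ≤ M → IsUnit (B m))
    (R : ℕ → Matrix (Fin (l+1)) (Fin (l+1)) ℝ)
    (hR : ∀ (m : ℕ), 1 ≤ m → m ≤ M → R m = -(U (m-1) * (B m)⁻¹))
    (S : Fin (l+1) → ℝ)
    (hS : ∀ i, S i = 1 + ∑ m ∈ Finset.Icc 1 M, ∑ j, (((List.range' 1 m).map R).prod) i j)
    (hnorm : ∑ s, π s = 1)
    (hinv : IsUnit (Matrix.vecMulVec S (fun j => if j = (0 : Fin (l+1)) then (1:ℝ) else 0) - B 0)) :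
    (fun i => π ((0 : Fin (M+1)), i))
      = Matrix.vecMul (fun j => if j = (0 : Fin (l+1)) then (1:ℝ) else 0)
          (Matrix.vecMulVec S (fun j => if j = (0 : Fin (l+1)) then (1:ℝ) else 0) - B 0)⁻¹ := by
  have hδ : (fun j : Fin (l+1) => if j = 0 then (1:ℝ) else 0) = Pi.single 0 1 :=
    funext fun j => (Pi.single_apply 0 1 j).symm
  have hU' (m : ℕ) (hm : m < M) : levelBlock Q m (m+1) = U m :=
    levelBlock_eq_of_apply hm.le hm (hU m hm)
  have hB' (m : ℕ) (hm : m ≤ M) : B m = redirectedBlock 0 (levelBlock Q) m := by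
    rw [hB m hm, redirectedBlock, levelBlock_eq_of_apply hm hm (hW m hm)]
    congr 1
    rcases hm.lt_or_eq with hm | rfl
    · ext i j; rw [hUt m hm, hU' m hm, vecMulVec_mulVec_one_single_apply]
    · simp [hUtM, levelBlock_of_lt Q (Or.inr (Nat.lt_succ_self m))]
  have hst : IsDESStationary M 0 (levelBlock Q) (levelVec π) := by
    refine isDESStationary_levelBlock htri hrow hπ fun n i j hj => ?_
    by_cases hn : n < M
    · rw [levelBlock_eq_of_apply hn hn.le (hD (n+1) n.succ_pos hn)]
      exact hDES (n+1) n.succ_pos hn i j hj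
    · rw [levelBlock_of_lt Q (Or.inl (by omega))]; rfl
  have hstep (n : ℕ) (hn : n < M) : levelVec π (n+1) = levelVec π n ᵥ* R (n+1) := by
    rw [hR (n+1) (by omega) hn, Nat.add_sub_cancel]
    refine eq_vecMul_neg_mul_nonsing_inv (hBinv (n+1) (by omega) hn) ?_
    rw [← hU' n hn, hB' (n+1) hn]
    exact hst.vecMul_redirectedBlock_succ hn
  have hprod (m : ℕ) (hm : m ∈ Icc 1 M) :
      levelVec π m = levelVec π 0 ᵥ* ((List.range' 1 m).map R).prod :=
    eq_vecMul_prod_range' fun n hn => hstep n (by simp at hm; omega)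
  have hnormS : levelVec π 0 ⬝ᵥ S = 1 := by
    have hS' : S = 1 + ∑ m ∈ Icc 1 M, ((List.range' 1 m).map R).prod *ᵥ 1 := by
      ext i; simp [hS, mulVec, dotProduct]
    rw [hS', dotProduct_one_add_sum_mulVec_one hprod, ← sum_eq_sum_levelVec, hnorm]
  have hlevel0 : levelVec π 0 ᵥ* (vecMulVec S (Pi.single 0 1) - B 0) = Pi.single 0 1 := by
    rw [vecMul_sub, vecMul_vecMulVec, hnormS, one_smul, hB' 0 (Nat.zero_le M),
      hst.vecMul_redirectedBlock_zero, sub_zero]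
  rw [hδ] at hinv ⊢
  exact eq_vecMul_nonsing_inv hinv hlevel0
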